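/- arXiv:2305.13251 — 8 statements merged into one kernel-verified Lean document; each statement's English description precedes it below -/
import Mathlib

section
/- The function g : [0,∞) → ℝ defined by g(x) = x for 0 ≤ x < 1, g(x) = 2 - x for 1 ≤ x < 5/3, and g(x) = 1/3 for x ≥ 5/3 is subadditive on [0,∞), but its even extension f(x) = g(|x|) is not subadditive on ℝ (in particular f(1) = 1 > 2/3 = f(3) + f(-2)). -/
noncomputable def gEx : ℝ → ℝ := fun x =>
  if x < 1 then x else if x < 5/3 then 2 - x else 1/3

theorem gEx_subadditive_but_even_extension_not :
    (∀ x y : ℝ, 0 ≤ x → 0 ≤ y → gEx (x + y) ≤ gEx x + gEx y) ∧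
    ¬ (∀ x y : ℝ, gEx |x + y| ≤ gEx |x| + gEx |y|) ∧
    gEx |(1 : ℝ)| = 1 ∧ gEx |(3 : ℝ)| + gEx |(-2 : ℝ)| = 2/3 := by
  refine ⟨?_, ?_, ?_, ?_⟩
  · intro x y hx hy
    unfold gEx
    split_ifs <;> linarith
  · intro h
    have := h 3 (-2)
    norm_num [gEx] at this
  · norm_num [gEx]
  · norm_num [gEx]
end

section
/- Let d : ℝ × ℝ → [0,∞) be a continuous distance on ℝ. For any x,y ∈ ℝ, if the one-sided partial derivative of d in its second argument from the left at (x,y) exists and the corresponding one at (y,y) exists, then |∂₂⁻ d(x,y)| ≤ |∂₂⁻ d(y,y)|. Similarly for the right one-sided derivatives: |∂₂⁺ d(x,y)| ≤ |∂₂⁺ d(y,y)|. -/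
def IsDistance (d : ℝ → ℝ → ℝ) : Prop :=
  (∀ x y, 0 ≤ d x y) ∧ (∀ x y, d x y = 0 ↔ x = y) ∧
  (∀ x y, d x y = d y x) ∧ (∀ x y z, d x z ≤ d x y + d y z)

lemma aux_abs_deriv_le (f g : ℝ → ℝ) (L M : ℝ)
    (hf : HasDerivWithinAt f L (Set.Ici 0) 0)
    (hg : HasDerivWithinAt g M (Set.Ici 0) 0)
    (hle : ∀ h : ℝ, 0 < h → |f h - f 0| ≤ g h - g 0) : |L| ≤ |M| := by
  rw [hasDerivWithinAt_iff_tendsto_slope] at hf hg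
  have hset : (Set.Ici (0:ℝ)) \ {0} = Set.Ioi 0 := by
    ext t; simp [Set.mem_diff, lt_iff_le_and_ne, eq_comm]
  rw [hset] at hf hg
  have hf' : Filter.Tendsto (fun h => |slope f 0 h|) (nhdsWithin 0 (Set.Ioi 0)) (nhds |L|) :=
    hf.abs
  have key : ∀ h ∈ Set.Ioi (0:ℝ), |slope f 0 h| ≤ slope g 0 h := by
    intro h hh
    rw [Set.mem_Ioi] at hh
    have e1 : slope f 0 h = (f h - f 0) / h := by simp [slope_def_field]
    have e2 : slope g 0 h = (g h - g 0) / h := by simp [slope_def_field]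
    rw [e1, e2, abs_div, abs_of_pos hh]
    exact div_le_div_of_nonneg_right (hle h hh) hh.le
  have hLM : |L| ≤ M :=
    le_of_tendsto_of_tendsto hf' hg (eventually_nhdsWithin_of_forall key)
  exact hLM.trans (le_abs_self M)

/-- One-sided partial derivatives in the second variable:
`∂₂⁻ d(x,y) = lim_{h→0⁺} (d(x, y-h) - d(x,y))/h` is the right derivative at `0` of
`h ↦ d x (y - h)`, and similarly `∂₂⁺` with `h ↦ d x (y + h)`. -/
theorem abs_onesided_partial_le (d : ℝ → ℝ → ℝ)
    (hdist : IsDistance d) (hcont : Continuous fun p : ℝ × ℝ => d p.1 p.2)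
    (x y : ℝ) :
    (∀ L M : ℝ, HasDerivWithinAt (fun h => d x (y - h)) L (Set.Ici 0) 0 →
      HasDerivWithinAt (fun h => d y (y - h)) M (Set.Ici 0) 0 → |L| ≤ |M|) ∧
    (∀ L M : ℝ, HasDerivWithinAt (fun h => d x (y + h)) L (Set.Ici 0) 0 →
      HasDerivWithinAt (fun h => d y (y + h)) M (Set.Ici 0) 0 → |L| ≤ |M|) := by
  obtain ⟨hnn, heq, hsymm, htri⟩ := hdist
  have hyy : d y y = 0 := (heq y y).mpr rfl
  constructor
  · intro L M hL hM
    refine aux_abs_deriv_le _ _ L M hL hM ?_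
    intro h hh
    have h1 : d x (y - h) ≤ d x y + d y (y - h) := htri x y (y - h)
    have h2 : d x y ≤ d x (y - h) + d (y - h) y := htri x (y - h) y
    rw [hsymm (y - h) y] at h2
    simp only [sub_zero]
    rw [hyy, sub_zero, abs_sub_le_iff]
    constructor <;> linarith
  · intro L M hL hM
    refine aux_abs_deriv_le _ _ L M hL hM ?_
    intro h hh
    have h1 : d x (y + h) ≤ d x y + d y (y + h) := htri x y (y + h)
    have h2 : d x y ≤ d x (y + h) + d (y + h) y := htri x (y + h) y
    rw [hsymm (y + h) y] at h2
    simp only [add_zero]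
    rw [hyy, sub_zero, abs_sub_le_iff]
    constructor <;> linarith
end

section
/- Let d : ℝ × ℝ → [0,∞) be continuous on ℝ², twice continuously differentiable on ℝ² \ Δ (Δ the diagonal), with ∂₁∂₂ d(a,b) ≥ 0 for all (a,b) ∉ Δ, and symmetric (d(x,y) = d(y,x)) with d(x,x) = 0. Then for any real numbers x < y < z, d(x,z) ≤ d(x,y) + d(y,z). -/
/-!
Since `∂₁∂₂ d ≥ 0` off the diagonal, `s ↦ ∂₂ d(s, t)` is nondecreasing on `s < t`. Hence for
`x ≤ y` the function `t ↦ d(y, t) - d(x, t)` has nonnegative derivative for `t > y`, so it is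
nondecreasing on `[y, ∞)`; comparing its values at `y` and `z` and using `d(y, y) = 0` gives the
triangle inequality.
-/

open Set

section PartialDeriv

variable {𝕜 E F : Type*} [NontriviallyNormedField 𝕜] [NormedAddCommGroup E] [NormedSpace 𝕜 E]
  [NormedAddCommGroup F] [NormedSpace 𝕜 F] {f : E → 𝕜 → F}

theorem hasDerivAt_snd_of_differentiableAt {a : E} {b : 𝕜}
    (hf : DifferentiableAt 𝕜 (fun p : E × 𝕜 => f p.1 p.2) (a, b)) :
    HasDerivAt (f a) (fderiv 𝕜 (fun p : E × 𝕜 => f p.1 p.2) (a, b) (0, 1)) b :=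
  hf.hasFDerivAt.comp_hasDerivAt b ((hasDerivAt_const b a).prodMk (hasDerivAt_id b))

theorem ContDiffOn.contDiffOn_deriv_snd {n : WithTop ℕ∞} {U : Set (E × 𝕜)} (hU : IsOpen U)
    (hf : ContDiffOn 𝕜 (n + 1) (fun p : E × 𝕜 => f p.1 p.2) U) :
    ContDiffOn 𝕜 n (fun p : E × 𝕜 => deriv (f p.1) p.2) U := by
  have hfderiv := hf.fderiv_of_isOpen hU le_rfl
  refine ((ContinuousLinearMap.apply 𝕜 F ((0 : E), (1 : 𝕜))).contDiff.comp_contDiffOn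
    hfderiv).congr fun p hp => ?_
  have hdiff := (hf.differentiableOn (by simp)).differentiableAt (hU.mem_nhds hp)
  exact (hasDerivAt_snd_of_differentiableAt hdiff).deriv

end PartialDeriv

section CrossDerivNonneg

variable {d : ℝ → ℝ → ℝ}

theorem monotoneOn_deriv_snd_of_cross_deriv_nonneg
    (hC2 : ContDiffOn ℝ 2 (fun p : ℝ × ℝ => d p.1 p.2) {p : ℝ × ℝ | p.1 ≠ p.2})
    (hmix : ∀ a b : ℝ, a ≠ b → 0 ≤ deriv (fun s => deriv (fun t => d s t) b) a) (t : ℝ) :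
    MonotoneOn (fun s => deriv (d s) t) (Iio t) := by
  have hU : IsOpen {p : ℝ × ℝ | p.1 ≠ p.2} := isOpen_ne_fun continuous_fst continuous_snd
  have hslice : ContDiffOn ℝ 1 (fun s => deriv (d s) t) (Iio t) :=
    (hC2.contDiffOn_deriv_snd hU).comp (contDiff_id.prodMk contDiff_const).contDiffOn
      fun s hs => ne_of_lt hs
  refine monotoneOn_of_deriv_nonneg (convex_Iio t) hslice.continuousOn ?_ fun s hs => ?_
  · rw [interior_Iio]
    exact hslice.differentiableOn one_ne_zero
  · exact hmix s t (mem_Iio.mp (interior_subset hs)).ne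

theorem monotoneOn_sub_of_cross_deriv_nonneg (hcont : ∀ s, Continuous (d s))
    (hC2 : ContDiffOn ℝ 2 (fun p : ℝ × ℝ => d p.1 p.2) {p : ℝ × ℝ | p.1 ≠ p.2})
    (hmix : ∀ a b : ℝ, a ≠ b → 0 ≤ deriv (fun s => deriv (fun t => d s t) b) a)
    {x y : ℝ} (hxy : x ≤ y) :
    MonotoneOn (fun t => d y t - d x t) (Ici y) := by
  have hU : IsOpen {p : ℝ × ℝ | p.1 ≠ p.2} := isOpen_ne_fun continuous_fst continuous_snd
  have hslice : ∀ s t : ℝ, s < t → DifferentiableAt ℝ (d s) t := fun s t hst =>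
    (hasDerivAt_snd_of_differentiableAt <|
      (hC2.differentiableOn (by simp)).differentiableAt (hU.mem_nhds hst.ne)).differentiableAt
  refine monotoneOn_of_deriv_nonneg (convex_Ici y) ((hcont y).sub (hcont x)).continuousOn ?_
    fun t ht => ?_
  · rw [interior_Ici]
    exact fun t ht => ((hslice y t ht).sub (hslice x t (hxy.trans_lt ht))).differentiableWithinAt
  · rw [interior_Ici] at ht
    rw [deriv_fun_sub (hslice y t ht) (hslice x t (hxy.trans_lt ht)), sub_nonneg]
    exact monotoneOn_deriv_snd_of_cross_deriv_nonneg hC2 hmix t (hxy.trans_lt ht) ht hxy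

end CrossDerivNonneg

theorem triangle_of_cross_deriv_nonneg_continuous_general (d : ℝ → ℝ → ℝ)
    (hcont : Continuous fun p : ℝ × ℝ => d p.1 p.2)
    (hC2 : ContDiffOn ℝ 2 (fun p : ℝ × ℝ => d p.1 p.2) {p : ℝ × ℝ | p.1 ≠ p.2})
    (hmix : ∀ a b : ℝ, a ≠ b → 0 ≤ deriv (fun s => deriv (fun t => d s t) b) a)
    (hdiag : ∀ x, d x x = 0) :
    ∀ x y z : ℝ, x < y → y < z → d x z ≤ d x y + d y z := by
  intro x y z hxy hyz
  have hslice_cont : ∀ s, Continuous (d s) := fun s => hcont.comp (Continuous.prodMk_right s)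
  have hmono : d y y - d x y ≤ d y z - d x z :=
    monotoneOn_sub_of_cross_deriv_nonneg hslice_cont hC2 hmix hxy.le self_mem_Ici hyz.le hyz.le
  linarith [hdiag y]

theorem triangle_of_cross_deriv_nonneg_continuous (d : ℝ → ℝ → ℝ)
    (hnonneg : ∀ x y, 0 ≤ d x y)
    (hcont : Continuous fun p : ℝ × ℝ => d p.1 p.2)
    (hC2 : ContDiffOn ℝ 2 (fun p : ℝ × ℝ => d p.1 p.2) {p : ℝ × ℝ | p.1 ≠ p.2})
    (hmix : ∀ a b : ℝ, a ≠ b → 0 ≤ deriv (fun s => deriv (fun t => d s t) b) a)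
    (hsymm : ∀ x y, d x y = d y x) (hdiag : ∀ x, d x x = 0) :
    ∀ x y z : ℝ, x < y → y < z → d x z ≤ d x y + d y z :=
  triangle_of_cross_deriv_nonneg_continuous_general d hcont hC2 hmix hdiag
end

section
/- Let d : ℝ × ℝ → [0,∞) be twice continuously differentiable on ℝ² \ Δ (not necessarily continuous on Δ), symmetric, with d(x,x) = 0 for all x, and ∂₁∂₂ d(a,b) ≥ 0 for all (a,b) ∉ Δ. Then for any x < y < z, d(x,z) ≤ d(x,y) + d(y,z). -/
open Set Filter Function

lemma isOpen_setOf_fst_ne_snd : IsOpen {p : ℝ × ℝ | p.1 ≠ p.2} :=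
  isOpen_ne_fun continuous_fst continuous_snd

section OffDiagonal

variable {d : ℝ → ℝ → ℝ}

lemma hasDerivAt_of_differentiableAt_uncurry {s t : ℝ}
    (h : DifferentiableAt ℝ (uncurry d) (s, t)) :
    HasDerivAt (d s) (fderiv ℝ (uncurry d) (s, t) (0, 1)) t :=
  h.hasFDerivAt.comp_hasDerivAt t ((hasDerivAt_const t s).prodMk (hasDerivAt_id t))

lemma differentiableAt_of_differentiableOn_uncurry
    (hd : DifferentiableOn ℝ (uncurry d) {p : ℝ × ℝ | p.1 ≠ p.2}) {s t : ℝ} (hst : s ≠ t) :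
    DifferentiableAt ℝ (d s) t :=
  (hasDerivAt_of_differentiableAt_uncurry
    (hd.differentiableAt (isOpen_setOf_fst_ne_snd.mem_nhds hst))).differentiableAt

lemma differentiableAt_deriv_snd (hC2 : ContDiffOn ℝ 2 (uncurry d) {p : ℝ × ℝ | p.1 ≠ p.2})
    {s b : ℝ} (hsb : s ≠ b) :
    DifferentiableAt ℝ (fun s' => deriv (d s') b) s := by
  have hU := isOpen_setOf_fst_ne_snd
  have hd := hC2.differentiableOn (by norm_num)
  have hfderiv : DifferentiableAt ℝ (fun p => fderiv ℝ (uncurry d) p (0, 1)) (s, b) :=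
    (((hC2.fderiv_of_isOpen hU (by norm_num)).differentiableOn one_ne_zero).differentiableAt
      (hU.mem_nhds hsb)).clm_apply (differentiableAt_const _)
  have heq : (fun s' => fderiv ℝ (uncurry d) (s', b) (0, 1)) =ᶠ[nhds s]
      fun s' => deriv (d s') b := by
    filter_upwards [isOpen_ne.mem_nhds hsb] with s' hs'
    exact ((hasDerivAt_of_differentiableAt_uncurry
      (hd.differentiableAt (hU.mem_nhds hs'))).deriv).symm
  have hslice : DifferentiableAt ℝ (fun s' => fderiv ℝ (uncurry d) (s', b) (0, 1)) s :=
    hfderiv.comp (f := fun s' : ℝ => (s', b)) s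
      (differentiableAt_id.prodMk (differentiableAt_const b))
  exact hslice.congr_of_eventuallyEq heq.symm

lemma deriv_snd_le_of_le (hC2 : ContDiffOn ℝ 2 (uncurry d) {p : ℝ × ℝ | p.1 ≠ p.2})
    (hmix : ∀ a b : ℝ, a ≠ b → 0 ≤ deriv (fun s => deriv (d s) b) a)
    {x y b : ℝ} (hxy : x ≤ y) (hyb : y < b) :
    deriv (d x) b ≤ deriv (d y) b := by
  have hdiff : DifferentiableOn ℝ (fun s => deriv (d s) b) (Iio b) :=
    fun s hs => (differentiableAt_deriv_snd hC2 (ne_of_lt hs)).differentiableWithinAt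
  have hmono : MonotoneOn (fun s => deriv (d s) b) (Iio b) := by
    apply monotoneOn_of_deriv_nonneg (convex_Iio b) hdiff.continuousOn
    · rwa [interior_Iio]
    · rw [interior_Iio]
      exact fun s hs => hmix s b (ne_of_lt hs)
  exact hmono (hxy.trans_lt hyb) hyb hxy

lemma antitoneOn_sub_of_lt (hC2 : ContDiffOn ℝ 2 (uncurry d) {p : ℝ × ℝ | p.1 ≠ p.2})
    (hmix : ∀ a b : ℝ, a ≠ b → 0 ≤ deriv (fun s => deriv (d s) b) a) {x y : ℝ} (hxy : x < y) :
    AntitoneOn (fun t => d x t - d y t) (Ioi y) := by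
  have hd := hC2.differentiableOn (by norm_num)
  have hderiv : ∀ t ∈ Ioi y, HasDerivAt (fun t => d x t - d y t)
      (deriv (d x) t - deriv (d y) t) t := fun t (ht : y < t) =>
    (differentiableAt_of_differentiableOn_uncurry hd (hxy.trans ht).ne).hasDerivAt.sub
      (differentiableAt_of_differentiableOn_uncurry hd ht.ne).hasDerivAt
  have hdiff : DifferentiableOn ℝ (fun t => d x t - d y t) (Ioi y) :=
    fun t ht => (hderiv t ht).differentiableAt.differentiableWithinAt
  apply antitoneOn_of_deriv_nonpos (convex_Ioi y) hdiff.continuousOn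
  · rwa [interior_Ioi]
  · rw [interior_Ioi]
    intro t ht
    rw [(hderiv t ht).deriv, sub_nonpos]
    exact deriv_snd_le_of_le hC2 hmix hxy.le ht

end OffDiagonal

theorem triangle_of_cross_deriv_nonneg_general (d : ℝ → ℝ → ℝ)
    (hnonneg : ∀ x y, 0 ≤ d x y)
    (hC2 : ContDiffOn ℝ 2 (fun p : ℝ × ℝ => d p.1 p.2) {p : ℝ × ℝ | p.1 ≠ p.2})
    (hmix : ∀ a b : ℝ, a ≠ b → 0 ≤ deriv (fun s => deriv (fun t => d s t) b) a) :
    ∀ x y z : ℝ, x < y → y < z → d x z ≤ d x y + d y z := by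
  intro x y z hxy hyz
  have hanti := antitoneOn_sub_of_lt hC2 hmix hxy
  have hbound : ∀ t ∈ Ioo y z, d x z - d y z ≤ d x t := fun t ht =>
    (hanti ht.1 hyz ht.2.le).trans (sub_le_self _ (hnonneg y t))
  have hcont : ContinuousAt (d x) y :=
    (differentiableAt_of_differentiableOn_uncurry (hC2.differentiableOn (by norm_num))
      hxy.ne).continuousAt
  have hlim : d x z - d y z ≤ d x y :=
    ge_of_tendsto (hcont.tendsto.mono_left nhdsWithin_le_nhds)
      (eventually_of_mem (Ioo_mem_nhdsGT hyz) hbound)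
  linarith

theorem triangle_of_cross_deriv_nonneg (d : ℝ → ℝ → ℝ)
    (hnonneg : ∀ x y, 0 ≤ d x y)
    (hC2 : ContDiffOn ℝ 2 (fun p : ℝ × ℝ => d p.1 p.2) {p : ℝ × ℝ | p.1 ≠ p.2})
    (hmix : ∀ a b : ℝ, a ≠ b → 0 ≤ deriv (fun s => deriv (fun t => d s t) b) a)
    (hsymm : ∀ x y, d x y = d y x) (hdiag : ∀ x, d x x = 0) :
    ∀ x y z : ℝ, x < y → y < z → d x z ≤ d x y + d y z :=
  triangle_of_cross_deriv_nonneg_general d hnonneg hC2 hmix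
end

section
/- Let d : ℝ × ℝ → [0,∞) be C² on ℝ² \ Δ with: (H1) d(x,y) > 0 for (x,y) ∉ Δ and d(x,x) = 0; (H2) symmetry; (H3) ∂₁∂₂ d ≥ 0 off the diagonal; (H4B) for every a < b, the limits lim_{λ→+∞} [d(b,λ) − d(a,λ)] and lim_{λ→−∞} [d(b,λ) − d(a,λ)] exist, are finite, and the former is at most the latter. Then d is a distance on ℝ. -/
/-!
For `a < b` the derivative of `l ↦ d b l - d a l` is `∂₂d(b,l) - ∂₂d(a,l)`, and `∂₁∂₂d ≥ 0` makes
`s ↦ ∂₂d(s,l)` nondecreasing on `[a,b]` whenever `l ∉ [a,b]`. Hence `l ↦ d b l - d a l` is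
nondecreasing on `(-∞,a)` and on `(b,∞)`, so its value at any point right of `b` is at most its limit
`L` at `+∞`, its value at any point left of `a` is at least its limit `M` at `-∞`, and `L ≤ M`.
For `x < z` the triangle inequality `d x z ≤ d x y + d y z` follows by comparing such values with
`d` near the diagonal, using `d ≥ 0` and the continuity of `d` off the diagonal, in each of the
three possible positions of `y`.
-/

open Set Filter Topology

section MixedPartials

variable {d : ℝ → ℝ → ℝ} {U : Set (ℝ × ℝ)}

theorem hasDerivAt_right_of_differentiableAt {s t : ℝ}
    (hd : DifferentiableAt ℝ (fun p : ℝ × ℝ => d p.1 p.2) (s, t)) :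
    HasDerivAt (d s) (fderiv ℝ (fun p : ℝ × ℝ => d p.1 p.2) (s, t) (0, 1)) t :=
  hd.hasFDerivAt.comp_hasDerivAt t ((hasDerivAt_const t s).prodMk (hasDerivAt_id t))

theorem differentiableAt_deriv_right_of_contDiffOn
    (hd : ContDiffOn ℝ 2 (fun p : ℝ × ℝ => d p.1 p.2) U) (hU : IsOpen U) {s l : ℝ}
    (hsl : (s, l) ∈ U) : DifferentiableAt ℝ (fun s' => deriv (d s') l) s := by
  set F := fun p : ℝ × ℝ => d p.1 p.2
  have hline : ∀ s', HasDerivAt (fun s' : ℝ => ((s', l) : ℝ × ℝ)) (1, 0) s' :=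
    fun s' => (hasDerivAt_id s').prodMk (hasDerivAt_const s' l)
  have hψ : DifferentiableAt ℝ (fun p => fderiv ℝ F p (0, 1)) (s, l) :=
    (((hd.fderiv_of_isOpen hU (by norm_num)).clm_apply contDiffOn_const).differentiableOn
      one_ne_zero).differentiableAt (hU.mem_nhds hsl)
  refine (hψ.comp s (hline s).differentiableAt).congr_of_eventuallyEq ?_
  filter_upwards [(hline s).continuousAt.preimage_mem_nhds (hU.mem_nhds hsl)] with s' hs'
  exact (hasDerivAt_right_of_differentiableAt
    ((hd.differentiableOn two_ne_zero).differentiableAt (hU.mem_nhds hs'))).deriv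

theorem deriv_right_le_of_mixed_deriv_nonneg
    (hd : ContDiffOn ℝ 2 (fun p : ℝ × ℝ => d p.1 p.2) U) (hU : IsOpen U)
    (hmix : ∀ p ∈ U, 0 ≤ deriv (fun s => deriv (d s) p.2) p.1) {a b l : ℝ} (hab : a ≤ b)
    (hl : ∀ s ∈ Icc a b, (s, l) ∈ U) : deriv (d a) l ≤ deriv (d b) l := by
  have hdiff : ∀ s ∈ Icc a b, DifferentiableAt ℝ (fun s' => deriv (d s') l) s :=
    fun s hs => differentiableAt_deriv_right_of_contDiffOn hd hU (hl s hs)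
  refine monotoneOn_of_deriv_nonneg (convex_Icc a b)
    (fun s hs => (hdiff s hs).continuousAt.continuousWithinAt)
    (fun s hs => (hdiff s (interior_subset hs)).differentiableWithinAt)
    (fun s hs => hmix _ (hl s (interior_subset hs)))
    (left_mem_Icc.2 hab) (right_mem_Icc.2 hab) hab

theorem monotoneOn_sub_of_mixed_deriv_nonneg
    (hd : ContDiffOn ℝ 2 (fun p : ℝ × ℝ => d p.1 p.2) U) (hU : IsOpen U)
    (hmix : ∀ p ∈ U, 0 ≤ deriv (fun s => deriv (d s) p.2) p.1) {a b : ℝ} (hab : a ≤ b)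
    {I : Set ℝ} (hI : Convex ℝ I) (hIU : Icc a b ×ˢ I ⊆ U) :
    MonotoneOn (fun l => d b l - d a l) I := by
  have hderiv : ∀ s ∈ Icc a b, ∀ l ∈ I, HasDerivAt (d s) (deriv (d s) l) l := fun s hs l hl =>
    (hasDerivAt_right_of_differentiableAt ((hd.differentiableOn two_ne_zero).differentiableAt
      (hU.mem_nhds (hIU ⟨hs, hl⟩)))).differentiableAt.hasDerivAt
  have hsub : ∀ l ∈ I, HasDerivAt (fun l => d b l - d a l) (deriv (d b) l - deriv (d a) l) l :=
    fun l hl => (hderiv b (right_mem_Icc.2 hab) l hl).sub (hderiv a (left_mem_Icc.2 hab) l hl)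
  refine monotoneOn_of_hasDerivWithinAt_nonneg hI
    (fun l hl => (hsub l hl).continuousAt.continuousWithinAt)
    (fun l hl => (hsub l (interior_subset hl)).hasDerivWithinAt) fun l hl => ?_
  exact sub_nonneg.2 <| deriv_right_le_of_mixed_deriv_nonneg hd hU hmix hab
    fun s hs => hIU ⟨hs, interior_subset hl⟩

end MixedPartials

theorem MonotoneOn.ge_of_tendsto_Ioi {α β : Type*} [LinearOrder α] [TopologicalSpace β]
    [Preorder β] [OrderClosedTopology β] {f : α → β} {c x : α} {L : β}
    (hf : MonotoneOn f (Ioi c)) (hL : Tendsto f atTop (𝓝 L)) (hx : c < x) : f x ≤ L :=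
  have : Nonempty α := ⟨x⟩
  ge_of_tendsto hL <| by
    filter_upwards [eventually_ge_atTop x] with l hl using hf hx (hx.trans_le hl) hl

theorem MonotoneOn.le_of_tendsto_Iio {α β : Type*} [LinearOrder α] [TopologicalSpace β]
    [Preorder β] [OrderClosedTopology β] {f : α → β} {c x : α} {M : β}
    (hf : MonotoneOn f (Iio c)) (hM : Tendsto f atBot (𝓝 M)) (hx : x < c) : M ≤ f x :=
  have : Nonempty α := ⟨x⟩
  le_of_tendsto hM <| by
    filter_upwards [eventually_le_atBot x] with l hl using hf (hl.trans_lt hx) hx hl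

section Triangle

variable {d : ℝ → ℝ → ℝ}

theorem le_of_eventually_le_sub {x y c : ℝ} {s : Set ℝ} [(𝓝[s] y).NeBot] (hy : ∀ l, 0 ≤ d y l)
    (hx : ContinuousAt (d x) y) (h : ∀ᶠ l in 𝓝[s] y, c ≤ d x l - d y l) : c ≤ d x y :=
  ge_of_tendsto hx.continuousWithinAt.tendsto <| by
    filter_upwards [h] with l hl
    linarith [hy l]

theorem triangle_of_lt_of_monotoneOn_sub (hnonneg : ∀ x y, 0 ≤ d x y)
    (hsymm : ∀ x y, d x y = d y x) (hcont : ∀ x y, x ≠ y → ContinuousAt (d x) y)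
    (hmono : ∀ a b, a < b → MonotoneOn (fun l => d b l - d a l) (Iio a) ∧
      MonotoneOn (fun l => d b l - d a l) (Ioi b))
    (hlim : ∀ a b : ℝ, a < b → ∃ L M : ℝ,
      Tendsto (fun l => d b l - d a l) atTop (𝓝 L) ∧
      Tendsto (fun l => d b l - d a l) atBot (𝓝 M) ∧ L ≤ M)
    {x y z : ℝ} (hxz : x < z) (hxy : x ≠ y) (hyz : y ≠ z) : d x z ≤ d x y + d y z := by
  rcases lt_or_gt_of_ne hxy with hxy | hyx
  · rcases lt_or_gt_of_ne hyz with hyz | hzy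
    · have hx : d z x - d y x ≤ d z y := le_of_eventually_le_sub (hnonneg y) (hcont z y hyz.ne')
        (by filter_upwards [Ioo_mem_nhdsLT hxy] with l hl using
          (hmono y z hyz).1 hxy hl.2 hl.1.le)
      linarith [hsymm x z, hsymm x y, hsymm y z]
    · obtain ⟨hleft, hright⟩ := hmono z y hzy
      obtain ⟨L, M, hL, hM, hLM⟩ := hlim z y hzy
      have hx : M ≤ d y x - d z x := hleft.le_of_tendsto_Iio hM hxz
      have hy : -L ≤ d z y := by
        refine le_of_eventually_le_sub (s := Ioi y) (hnonneg y) (hcont z y hzy.ne) ?_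
        filter_upwards [self_mem_nhdsWithin] with l hl
        linarith [hright.ge_of_tendsto_Ioi hL hl]
      linarith [hsymm x z, hsymm x y, hsymm y z]
  · obtain ⟨hleft, hright⟩ := hmono y x hyx
    obtain ⟨L, M, hL, hM, hLM⟩ := hlim y x hyx
    have hz : d x z - d y z ≤ L := hright.ge_of_tendsto_Ioi hL hxz
    have hy : M ≤ d x y := le_of_eventually_le_sub (s := Iio y) (hnonneg y) (hcont x y hyx.ne')
      (by filter_upwards [self_mem_nhdsWithin] with l hl using
        hleft.le_of_tendsto_Iio hM hl)
    linarith

theorem isDistance_of_monotoneOn_sub (hnonneg : ∀ x y, 0 ≤ d x y)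
    (hpos : ∀ x y, x ≠ y → 0 < d x y) (hzero : ∀ x, d x x = 0) (hsymm : ∀ x y, d x y = d y x)
    (hcont : ∀ x y, x ≠ y → ContinuousAt (d x) y)
    (hmono : ∀ a b, a < b → MonotoneOn (fun l => d b l - d a l) (Iio a) ∧
      MonotoneOn (fun l => d b l - d a l) (Ioi b))
    (hlim : ∀ a b : ℝ, a < b → ∃ L M : ℝ,
      Tendsto (fun l => d b l - d a l) atTop (𝓝 L) ∧
      Tendsto (fun l => d b l - d a l) atBot (𝓝 M) ∧ L ≤ M) :
    IsDistance d := by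
  refine ⟨hnonneg, fun x y => ⟨fun h => ?_, fun h => h ▸ hzero x⟩, hsymm, fun x y z => ?_⟩
  · by_contra hxy
    exact (hpos x y hxy).ne' h
  rcases eq_or_ne x y with rfl | hxy
  · linarith [hzero x]
  rcases eq_or_ne y z with rfl | hyz
  · linarith [hzero y]
  rcases lt_trichotomy x z with hxz | rfl | hzx
  · exact triangle_of_lt_of_monotoneOn_sub hnonneg hsymm hcont hmono hlim hxz hxy hyz
  · linarith [hzero x, hnonneg x y, hnonneg y x]
  · linarith [triangle_of_lt_of_monotoneOn_sub hnonneg hsymm hcont hmono hlim hzx hyz.symm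
      hxy.symm, hsymm x z, hsymm x y, hsymm y z]

end Triangle

open Filter in
theorem distance_of_H4B (d : ℝ → ℝ → ℝ)
    (hnonneg : ∀ x y, 0 ≤ d x y)
    (hC2 : ContDiffOn ℝ 2 (fun p : ℝ × ℝ => d p.1 p.2) {p : ℝ × ℝ | p.1 ≠ p.2})
    (h1 : ∀ x y : ℝ, x ≠ y → 0 < d x y) (h1' : ∀ x : ℝ, d x x = 0)
    (h2 : ∀ x y, d x y = d y x)
    (h3 : ∀ a b : ℝ, a ≠ b → 0 ≤ deriv (fun s => deriv (fun t => d s t) b) a)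
    (h4B : ∀ a b : ℝ, a < b → ∃ L M : ℝ,
      Tendsto (fun l => d b l - d a l) atTop (nhds L) ∧
      Tendsto (fun l => d b l - d a l) atBot (nhds M) ∧ L ≤ M) :
    IsDistance d := by
  have hU : IsOpen {p : ℝ × ℝ | p.1 ≠ p.2} := isOpen_ne_fun continuous_fst continuous_snd
  have hcont : ∀ x y, x ≠ y → ContinuousAt (d x) y := fun x y hxy =>
    (hasDerivAt_right_of_differentiableAt ((hC2.differentiableOn two_ne_zero).differentiableAt
      (hU.mem_nhds hxy))).continuousAt
  have hmono : ∀ a b, a < b → MonotoneOn (fun l => d b l - d a l) (Iio a) ∧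
      MonotoneOn (fun l => d b l - d a l) (Ioi b) := fun a b hab =>
    ⟨monotoneOn_sub_of_mixed_deriv_nonneg hC2 hU (fun p hp => h3 p.1 p.2 hp) hab.le
      (convex_Iio a) fun _ hp => (hp.2.trans_le hp.1.1).ne',
    monotoneOn_sub_of_mixed_deriv_nonneg hC2 hU (fun p hp => h3 p.1 p.2 hp) hab.le
      (convex_Ioi b) fun _ hp => (hp.1.2.trans_lt hp.2).ne⟩
  exact isDistance_of_monotoneOn_sub hnonneg h1 h1' h2 hcont hmono h4B
end

section
/- Let d : ℝ × ℝ → [0,∞) be C² on ℝ² \ Δ with: (H1) d(x,y) > 0 for (x,y) ∉ Δ and d(x,x) = 0; (H2) symmetry; (H3) ∂₁∂₂ d ≥ 0 off the diagonal; (H4D) for every c ∈ ℝ, lim_{λ→−∞} d(c,λ) = lim_{λ→+∞} d(c,λ) and both limits are finite. Then d is a distance on ℝ. -/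
open Filter Set Topology

section Monotone

variable {α β : Type*} [LinearOrder α] [Preorder β] [TopologicalSpace β] [OrderClosedTopology β]
  {g f : α → β} {a t : α} {c : β}

theorem MonotoneOn.le_of_tendsto_atBot (hg : MonotoneOn g (Iio a))
    (hlim : Tendsto g atBot (𝓝 c)) (ht : t < a) : c ≤ g t :=
  have : Nonempty α := ⟨t⟩
  le_of_tendsto hlim <| by
    filter_upwards [eventually_le_atBot t] with u hu using hg (hu.trans_lt ht) ht hu

theorem MonotoneOn.le_of_tendsto_atTop (hg : MonotoneOn g (Ioi a))
    (hlim : Tendsto g atTop (𝓝 c)) (ht : a < t) : g t ≤ c :=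
  have : Nonempty α := ⟨t⟩
  ge_of_tendsto hlim <| by
    filter_upwards [eventually_ge_atTop t] with u hu using hg ht (ht.trans_le hu) hu

variable [TopologicalSpace α] [OrderTopology α] [DenselyOrdered α]

theorem MonotoneOn.le_of_le_of_tendsto_nhdsLT [NoMinOrder α] (hg : MonotoneOn g (Iio a))
    (hgf : ∀ u < a, g u ≤ f u) (hlim : Tendsto f (𝓝[<] a) (𝓝 c)) (ht : t < a) : g t ≤ c :=
  ge_of_tendsto hlim <| by
    filter_upwards [Ioo_mem_nhdsLT ht] with u hu using
      (hg ht hu.2 hu.1.le).trans (hgf u hu.2)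

theorem MonotoneOn.le_of_le_of_tendsto_nhdsGT [NoMaxOrder α] (hg : MonotoneOn g (Ioi a))
    (hfg : ∀ u > a, f u ≤ g u) (hlim : Tendsto f (𝓝[>] a) (𝓝 c)) (ht : a < t) : c ≤ g t :=
  le_of_tendsto hlim <| by
    filter_upwards [Ioo_mem_nhdsGT ht] with u hu using
      (hfg u hu.1).trans (hg hu.1 ht hu.2.le)

end Monotone

section MixedPartial

variable {d : ℝ → ℝ → ℝ} {U : Set (ℝ × ℝ)}

theorem hasDerivAt_slice (hU : IsOpen U) (hd : DifferentiableOn ℝ (fun q : ℝ × ℝ => d q.1 q.2) U)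
    {s t : ℝ} (hst : (s, t) ∈ U) :
    HasDerivAt (d s) (fderiv ℝ (fun q : ℝ × ℝ => d q.1 q.2) (s, t) (0, 1)) t :=
  (hd.differentiableAt (hU.mem_nhds hst)).hasFDerivAt.comp_hasDerivAt (f := fun u => (s, u)) t
    ((hasDerivAt_const t s).prodMk (hasDerivAt_id t))

theorem contDiffOn_deriv_slice (hU : IsOpen U)
    (hd : ContDiffOn ℝ 2 (fun q : ℝ × ℝ => d q.1 q.2) U) :
    ContDiffOn ℝ 1 (fun p : ℝ × ℝ => deriv (d p.1) p.2) U :=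
  ((hd.fderiv_of_isOpen hU (by norm_num)).clm_apply contDiffOn_const).congr fun _ hp =>
    (hasDerivAt_slice hU (hd.differentiableOn two_ne_zero) hp).deriv

theorem monotoneOn_deriv_slice (hU : IsOpen U)
    (hd : ContDiffOn ℝ 2 (fun q : ℝ × ℝ => d q.1 q.2) U)
    (hmix : ∀ p ∈ U, 0 ≤ deriv (fun s => deriv (d s) p.2) p.1)
    {J : Set ℝ} (hJ : Convex ℝ J) {t : ℝ} (hJU : ∀ s ∈ J, (s, t) ∈ U) :
    MonotoneOn (fun s => deriv (d s) t) J := by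
  have h : ContDiffOn ℝ 1 (fun s => deriv (d s) t) J :=
    (contDiffOn_deriv_slice hU hd).comp (contDiff_id.prodMk contDiff_const).contDiffOn hJU
  exact monotoneOn_of_deriv_nonneg hJ h.continuousOn
    ((h.differentiableOn one_ne_zero).mono interior_subset)
    fun s hs => hmix (s, t) (hJU s (interior_subset hs))

theorem monotoneOn_sub_slice (hU : IsOpen U)
    (hd : ContDiffOn ℝ 2 (fun q : ℝ × ℝ => d q.1 q.2) U)
    (hmix : ∀ p ∈ U, 0 ≤ deriv (fun s => deriv (d s) p.2) p.1)
    {a b : ℝ} (hab : a ≤ b) {I : Set ℝ} (hI : Convex ℝ I)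
    (hIU : ∀ s ∈ Icc a b, ∀ t ∈ I, (s, t) ∈ U) :
    MonotoneOn (fun t => d b t - d a t) I := by
  have hderiv : ∀ s ∈ Icc a b, ∀ t ∈ I, HasDerivAt (d s) (deriv (d s) t) t := fun s hs t ht =>
    (hasDerivAt_slice hU (hd.differentiableOn two_ne_zero) (hIU s hs t ht)).differentiableAt
      |>.hasDerivAt
  have ha : a ∈ Icc a b := left_mem_Icc.2 hab
  have hb : b ∈ Icc a b := right_mem_Icc.2 hab
  refine monotoneOn_of_hasDerivWithinAt_nonneg hI
    (fun t ht => ((hderiv b hb t ht).sub (hderiv a ha t ht)).continuousAt.continuousWithinAt)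
    (fun t ht => ((hderiv b hb t (interior_subset ht)).sub
      (hderiv a ha t (interior_subset ht))).hasDerivWithinAt)
    fun t ht => sub_nonneg.2 ?_
  exact monotoneOn_deriv_slice hU hd hmix (convex_Icc a b)
    (fun s hs => hIU s hs t (interior_subset ht)) ha hb hab

end MixedPartial

theorem triangle_of_forall_lt {α : Type*} [LinearOrder α] {d : α → α → ℝ}
    (hnonneg : ∀ x y, 0 ≤ d x y) (hzero : ∀ x, d x x = 0) (hsymm : ∀ x y, d x y = d y x)
    (hlt : ∀ x y z, x < z → y ≠ x → y ≠ z → d x z ≤ d x y + d y z) (x y z : α) :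
    d x z ≤ d x y + d y z := by
  have hlt' : ∀ x y z, x < z → d x z ≤ d x y + d y z := fun x y z hxz => by
    by_cases hyx : y = x
    · simp [hyx, hzero]
    by_cases hyz : y = z
    · simp [hyz, hzero]
    exact hlt x y z hxz hyx hyz
  rcases lt_trichotomy x z with hxz | rfl | hzx
  · exact hlt' x y z hxz
  · rw [hzero]; exact add_nonneg (hnonneg _ _) (hnonneg _ _)
  · linarith [hlt' z y x hzx, hsymm x z, hsymm x y, hsymm y z]

theorem triangle_of_monotoneOn_sub {d : ℝ → ℝ → ℝ} {L : ℝ → ℝ}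
    (hnonneg : ∀ x y, 0 ≤ d x y) (hsymm : ∀ x y, d x y = d y x)
    (hcont : ∀ s t, s ≠ t → ContinuousAt (d s) t)
    (hleft : ∀ a b, a < b → MonotoneOn (fun t => d b t - d a t) (Iio a))
    (hright : ∀ a b, a < b → MonotoneOn (fun t => d b t - d a t) (Ioi b))
    (hbot : ∀ c, Tendsto (d c) atBot (𝓝 (L c))) (htop : ∀ c, Tendsto (d c) atTop (𝓝 (L c)))
    {x y z : ℝ} (hxz : x < z) (hyx : y ≠ x) (hyz : y ≠ z) : d x z ≤ d x y + d y z := by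
  have ge_lim : ∀ {a b t}, a < b → t < a → L b - L a ≤ d b t - d a t := fun hab ht =>
    (hleft _ _ hab).le_of_tendsto_atBot ((hbot _).sub (hbot _)) ht
  have le_lim : ∀ {a b t}, a < b → b < t → d b t - d a t ≤ L b - L a := fun hab ht =>
    (hright _ _ hab).le_of_tendsto_atTop ((htop _).sub (htop _)) ht
  have le_left : ∀ {a b t}, a < b → t < a → d b t - d a t ≤ d b a := fun hab ht =>
    (hleft _ _ hab).le_of_le_of_tendsto_nhdsLT (fun u _ => sub_le_self _ (hnonneg _ _))
      ((hcont _ _ hab.ne').tendsto.mono_left nhdsWithin_le_nhds) ht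
  have ge_right : ∀ {a b t}, a < b → b < t → -d a b ≤ d b t - d a t := fun {a b _} hab ht =>
    (hright _ _ hab).le_of_le_of_tendsto_nhdsGT (f := fun u => -d a u)
      (fun u _ => by linarith [hnonneg b u])
      ((hcont _ _ hab.ne).tendsto.neg.mono_left nhdsWithin_le_nhds) ht
  rcases hyx.lt_or_gt with hyx | hxy
  · have hL : L x - L y ≤ d x y := by
      linarith [ge_lim hyx (sub_one_lt y), le_left hyx (sub_one_lt y)]
    linarith [le_lim hyx hxz]
  rcases hyz.lt_or_gt with hyz | hzy
  · linarith [le_left hyz hxy, hsymm x z, hsymm x y, hsymm y z]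
  · have hL : L z - L y ≤ d z y := by
      linarith [le_lim hzy (lt_add_one y), ge_right hzy (lt_add_one y)]
    linarith [ge_lim hzy hxz, hsymm x z, hsymm x y, hsymm y z]

open Filter in
theorem distance_of_H4D_general (d : ℝ → ℝ → ℝ)
    (hC2 : ContDiffOn ℝ 2 (fun p : ℝ × ℝ => d p.1 p.2) {p : ℝ × ℝ | p.1 ≠ p.2})
    (h1 : ∀ x y : ℝ, x ≠ y → 0 < d x y) (h1' : ∀ x : ℝ, d x x = 0)
    (h2 : ∀ x y, d x y = d y x)
    (h3 : ∀ a b : ℝ, a ≠ b → 0 ≤ deriv (fun s => deriv (fun t => d s t) b) a)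
    (h4D : ∀ c : ℝ, ∃ L : ℝ, Tendsto (fun l => d c l) atBot (nhds L) ∧
      Tendsto (fun l => d c l) atTop (nhds L)) :
    IsDistance d := by
  have hnonneg : ∀ x y, 0 ≤ d x y := fun x y =>
    (eq_or_ne x y).elim (fun h => h ▸ (h1' x).ge) fun h => (h1 x y h).le
  have hU : IsOpen {p : ℝ × ℝ | p.1 ≠ p.2} := isOpen_ne_fun continuous_fst continuous_snd
  have hmix : ∀ p ∈ {p : ℝ × ℝ | p.1 ≠ p.2}, 0 ≤ deriv (fun s => deriv (d s) p.2) p.1 :=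
    fun p hp => h3 p.1 p.2 hp
  have hcont : ∀ s t, s ≠ t → ContinuousAt (d s) t := fun s t hst =>
    (hasDerivAt_slice hU (hC2.differentiableOn two_ne_zero) (t := t) hst).continuousAt
  have hleft : ∀ a b, a < b → MonotoneOn (fun t => d b t - d a t) (Iio a) := fun a b hab =>
    monotoneOn_sub_slice hU hC2 hmix hab.le (convex_Iio a) fun _ hs _ ht => (ht.trans_le hs.1).ne'
  have hright : ∀ a b, a < b → MonotoneOn (fun t => d b t - d a t) (Ioi b) := fun a b hab =>
    monotoneOn_sub_slice hU hC2 hmix hab.le (convex_Ioi b) fun _ hs _ ht => (hs.2.trans_lt ht).ne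
  choose L hbot htop using h4D
  refine ⟨hnonneg, fun x y => ⟨fun h => by_contra fun hxy => (h1 x y hxy).ne' h, (· ▸ h1' x)⟩,
    h2,
    triangle_of_forall_lt hnonneg h1' h2 fun x y z hxz hyx hyz =>
      triangle_of_monotoneOn_sub hnonneg h2 hcont hleft hright hbot htop hxz hyx hyz⟩

open Filter in
theorem distance_of_H4D (d : ℝ → ℝ → ℝ)
    (hnonneg : ∀ x y, 0 ≤ d x y)
    (hC2 : ContDiffOn ℝ 2 (fun p : ℝ × ℝ => d p.1 p.2) {p : ℝ × ℝ | p.1 ≠ p.2})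
    (h1 : ∀ x y : ℝ, x ≠ y → 0 < d x y) (h1' : ∀ x : ℝ, d x x = 0)
    (h2 : ∀ x y, d x y = d y x)
    (h3 : ∀ a b : ℝ, a ≠ b → 0 ≤ deriv (fun s => deriv (fun t => d s t) b) a)
    (h4D : ∀ c : ℝ, ∃ L : ℝ, Tendsto (fun l => d c l) atBot (nhds L) ∧
      Tendsto (fun l => d c l) atTop (nhds L)) :
    IsDistance d :=
  distance_of_H4D_general d hC2 h1 h1' h2 h3 h4D
end

section
/- For any p ≥ 1, the function d : ℝ × ℝ → ℝ defined by d(x,y) = |y − x| / (|x|^p + |y|^p)^{1/p} for (x,y) ≠ (0,0) and d(0,0) = 0 is a distance on ℝ (the p-relative metric). -/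
open Set

noncomputable def pNorm (p x y : ℝ) : ℝ := (|x| ^ p + |y| ^ p) ^ (1 / p)

noncomputable def pRelDist (p x y : ℝ) : ℝ := |y - x| / pNorm p x y

section

variable {p t u v x y : ℝ}

lemma pNorm_nonneg (p x y : ℝ) : 0 ≤ pNorm p x y := by
  unfold pNorm; positivity

lemma pNorm_comm (p x y : ℝ) : pNorm p x y = pNorm p y x := by
  rw [pNorm, pNorm, add_comm]

lemma pNorm_pos (hx : x ≠ 0) : 0 < pNorm p x y := by
  unfold pNorm
  have := Real.rpow_pos_of_pos (abs_pos.2 hx) p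
  positivity

lemma pNorm_pos_right (hy : y ≠ 0) : 0 < pNorm p x y :=
  pNorm_comm p y x ▸ pNorm_pos hy

lemma abs_le_pNorm (hp : 0 < p) (x y : ℝ) : |x| ≤ pNorm p x y :=
  calc |x| = (|x| ^ p) ^ (1 / p) := by rw [one_div, Real.rpow_rpow_inv (abs_nonneg x) hp.ne']
    _ ≤ pNorm p x y := by
      unfold pNorm
      gcongr
      exact le_add_of_nonneg_right (by positivity)

lemma pNorm_le_abs_add_abs (hp : 1 ≤ p) (x y : ℝ) : pNorm p x y ≤ |x| + |y| := by
  have := NNReal.rpow_add_rpow_le_add ⟨|x|, abs_nonneg x⟩ ⟨|y|, abs_nonneg y⟩ hp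
  exact_mod_cast this

lemma pNorm_mul_mul (hp : p ≠ 0) (t x y : ℝ) : pNorm p (t * x) (t * y) = |t| * pNorm p x y := by
  simp only [pNorm, abs_mul]
  rw [Real.mul_rpow (abs_nonneg t) (abs_nonneg x), Real.mul_rpow (abs_nonneg t) (abs_nonneg y),
    ← mul_add, Real.mul_rpow (by positivity) (by positivity), one_div,
    Real.rpow_rpow_inv (abs_nonneg t) hp]

lemma pNorm_zero_right (hp : 0 < p) (x : ℝ) : pNorm p x 0 = |x| := by
  rw [pNorm, abs_zero, Real.zero_rpow hp.ne', add_zero, one_div,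
    Real.rpow_rpow_inv (abs_nonneg x) hp.ne']

lemma pRelDist_nonneg (p x y : ℝ) : 0 ≤ pRelDist p x y :=
  div_nonneg (abs_nonneg _) (pNorm_nonneg p x y)

lemma pRelDist_comm (p x y : ℝ) : pRelDist p x y = pRelDist p y x := by
  rw [pRelDist, pRelDist, abs_sub_comm, pNorm_comm]

@[simp]
lemma pRelDist_self (p x : ℝ) : pRelDist p x x = 0 := by
  simp [pRelDist]

lemma pRelDist_pos (hxy : x ≠ y) : 0 < pRelDist p x y := by
  have hN : 0 < pNorm p x y := by
    rcases eq_or_ne x 0 with rfl | hx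
    · exact pNorm_pos_right hxy.symm
    · exact pNorm_pos hx
  exact div_pos (abs_pos.2 (sub_ne_zero.2 hxy.symm)) hN

lemma pRelDist_eq_zero_iff : pRelDist p x y = 0 ↔ x = y :=
  ⟨fun h => by_contra fun hxy => (pRelDist_pos hxy).ne' h, fun h => h ▸ pRelDist_self p x⟩

lemma pRelDist_le_two (hp : 0 < p) (x y : ℝ) : pRelDist p x y ≤ 2 := by
  refine div_le_of_le_mul₀ (pNorm_nonneg p x y) zero_le_two ?_
  have hx := abs_le_pNorm hp x y
  have hy := abs_le_pNorm hp y x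
  rw [pNorm_comm] at hy
  linarith [abs_sub y x]

lemma pRelDist_zero_right (hp : 0 < p) (hx : x ≠ 0) : pRelDist p x 0 = 1 := by
  rw [pRelDist, pNorm_zero_right hp, zero_sub, abs_neg, div_self (abs_ne_zero.2 hx)]

lemma pRelDist_zero_right_le_one (hp : 0 < p) (x : ℝ) : pRelDist p x 0 ≤ 1 := by
  rcases eq_or_ne x 0 with rfl | hx
  · simp
  · exact (pRelDist_zero_right hp hx).le

lemma pRelDist_mul_mul (hp : p ≠ 0) (ht : t ≠ 0) (x y : ℝ) :
    pRelDist p (t * x) (t * y) = pRelDist p x y := by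
  rw [pRelDist, pRelDist, pNorm_mul_mul hp, ← mul_sub, abs_mul,
    mul_div_mul_left _ _ (abs_ne_zero.2 ht)]

lemma pRelDist_eq_pRelDist_div (hp : p ≠ 0) (hy : y ≠ 0) (x : ℝ) :
    pRelDist p x y = pRelDist p (x / y) 1 := by
  rw [← pRelDist_mul_mul hp hy (x / y) 1, mul_div_cancel₀ x hy, mul_one]

lemma pRelDist_inv_one (hp : p ≠ 0) (u : ℝ) : pRelDist p u⁻¹ 1 = pRelDist p u 1 := by
  rcases eq_or_ne u 0 with rfl | hu
  · rw [inv_zero]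
  · rw [← pRelDist_mul_mul hp hu, mul_inv_cancel₀ hu, mul_one, pRelDist_comm]

lemma pRelDist_le_one_of_nonneg (hp : 0 < p) (hu : 0 ≤ u) : pRelDist p u 1 ≤ 1 := by
  refine div_le_one_of_le₀ ?_ (pNorm_nonneg p u 1)
  rcases le_total u 1 with hu1 | hu1
  · calc |1 - u| ≤ |(1 : ℝ)| := by rw [abs_one, abs_of_nonneg (by linarith)]; linarith
      _ ≤ pNorm p u 1 := by rw [pNorm_comm]; exact abs_le_pNorm hp 1 u
  · calc |1 - u| ≤ |u| := by
          rw [abs_sub_comm, abs_of_nonneg (by linarith), abs_of_nonneg hu]; linarith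
      _ ≤ pNorm p u 1 := abs_le_pNorm hp u 1

lemma one_le_pRelDist_of_nonpos (hp : 1 ≤ p) (hu : u ≤ 0) : 1 ≤ pRelDist p u 1 := by
  rw [pRelDist, le_div_iff₀ (pNorm_pos_right one_ne_zero), one_mul]
  calc pNorm p u 1 ≤ |u| + |1| := pNorm_le_abs_add_abs hp u 1
    _ = |1 - u| := by rw [abs_one, abs_of_nonpos hu, abs_of_nonneg (by linarith)]; ring

lemma pRelDist_one_antitoneOn (hp : 0 < p) : AntitoneOn (fun u => pRelDist p u 1) (Icc 0 1) := by
  rintro u ⟨hu0, -⟩ w ⟨hw0, hw1⟩ huw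
  refine div_le_div₀ (abs_nonneg _) ?_ (pNorm_pos_right one_ne_zero) ?_
  · rw [abs_of_nonneg (by linarith), abs_of_nonneg (by linarith)]; linarith
  · unfold pNorm
    gcongr

lemma weightedMean_le_pNorm_div (hp : 1 ≤ p) (u v : ℝ) :
    (|u| ^ p * |v| + 1) / (|u| ^ p + 1) ≤ pNorm p (u * v) 1 / pNorm p u 1 := by
  set a := |u| ^ p
  have ha : 0 ≤ a := by positivity
  have hw : 0 < a + 1 := by positivity
  have hconv := (convexOn_rpow hp).2 (mem_Ici.2 (abs_nonneg v)) (mem_Ici.2 zero_le_one)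
    (div_nonneg ha hw.le) (div_nonneg zero_le_one hw.le) (by field_simp)
  simp only [smul_eq_mul, Real.one_rpow, mul_one] at hconv
  have hratio : pNorm p (u * v) 1 / pNorm p u 1 = ((a * |v| ^ p + 1) / (a + 1)) ^ p⁻¹ := by
    rw [pNorm, pNorm, abs_mul, Real.mul_rpow (abs_nonneg u) (abs_nonneg v), abs_one,
      Real.one_rpow, ← Real.div_rpow (by positivity) hw.le, one_div]
  rw [hratio, Real.le_rpow_inv_iff_of_pos (by positivity) (by positivity) (by linarith)]
  calc ((a * |v| + 1) / (a + 1)) ^ p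
        = (a / (a + 1) * |v| + 1 / (a + 1)) ^ p := by congr 1; ring
    _ ≤ a / (a + 1) * |v| ^ p + 1 / (a + 1) := hconv
    _ = (a * |v| ^ p + 1) / (a + 1) := by ring

/- Clearing denominators, the difference of the two sides is `(1 - u) (1 - v) (1 - a b)` when
`0 ≤ v`, and `(1 - u) (1 + s + 2 a s - a b (1 - s))` when `v = -s ≤ 0`. -/
lemma one_sub_mul_le_weightedMean {u v a b : ℝ} (hu1 : u ≤ 1) (hv : v ≤ 1)
    (ha0 : 0 ≤ a) (ha1 : a ≤ 1) (hb0 : 0 ≤ b) (hb1 : |v| ≤ 1 → b ≤ 1) :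
    1 - u * v ≤ (1 - u) * ((a * |v| + 1) / (a + 1)) + (1 - v) * ((b * u + 1) / (b + 1)) := by
  rw [mul_div_assoc', mul_div_assoc', div_add_div _ _ (by positivity) (by positivity),
    le_div_iff₀ (by positivity)]
  rcases le_total 0 v with hv0 | hv0
  · rw [abs_of_nonneg hv0] at hb1 ⊢
    have hab : a * b ≤ 1 := by nlinarith [hb1 hv]
    nlinarith [mul_nonneg (mul_nonneg (sub_nonneg.2 hu1) (sub_nonneg.2 hv)) (sub_nonneg.2 hab)]
  · rw [abs_of_nonpos hv0] at hb1 ⊢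
    have hs : 0 ≤ 1 - v + 2 * a * -v - a * b * (1 + v) := by
      have has : 0 ≤ a * -v := mul_nonneg ha0 (neg_nonneg.2 hv0)
      rcases le_total (-v) 1 with hs1 | hs1
      · have hab : a * b ≤ 1 := by nlinarith [hb1 hs1]
        nlinarith [mul_le_mul_of_nonneg_right hab (by linarith : 0 ≤ 1 + v)]
      · nlinarith [mul_nonneg (mul_nonneg ha0 hb0) (by linarith : 0 ≤ -v - 1)]
    nlinarith [mul_nonneg (sub_nonneg.2 hu1) hs]

lemma pRelDist_mul_le_of_mem_Icc_of_le_one (hp : 1 ≤ p) (hu : u ∈ Icc (0 : ℝ) 1)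
    (hv : v ≤ 1) :
    pRelDist p (u * v) 1 ≤ pRelDist p u 1 + pRelDist p v 1 := by
  obtain ⟨hu0, hu1⟩ := hu
  have hp0 : 0 < p := by linarith
  have hu_bound := weightedMean_le_pNorm_div hp u v
  have hv_bound : (|v| ^ p * u + 1) / (|v| ^ p + 1) ≤ pNorm p (u * v) 1 / pNorm p v 1 := by
    simpa only [mul_comm v u, abs_of_nonneg hu0] using weightedMean_le_pNorm_div hp v u
  have halg := one_sub_mul_le_weightedMean hu1 hv (by positivity)
    (Real.rpow_le_one (abs_nonneg u) (by rwa [abs_of_nonneg hu0]) hp0.le) (by positivity)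
    (fun h => Real.rpow_le_one (abs_nonneg v) h hp0.le)
  have hN : ∀ w, 0 < pNorm p w 1 := fun _ => pNorm_pos_right one_ne_zero
  have h1uv : 0 ≤ 1 - u * v := by nlinarith [mul_nonneg hu0 (sub_nonneg.2 hv)]
  rw [pRelDist, pRelDist, pRelDist, abs_of_nonneg h1uv, abs_of_nonneg (sub_nonneg.2 hu1),
    abs_of_nonneg (sub_nonneg.2 hv)]
  calc (1 - u * v) / pNorm p (u * v) 1
      ≤ ((1 - u) * (pNorm p (u * v) 1 / pNorm p u 1)
          + (1 - v) * (pNorm p (u * v) 1 / pNorm p v 1)) / pNorm p (u * v) 1 := by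
        refine div_le_div_of_nonneg_right (halg.trans (add_le_add ?_ ?_)) (hN _).le <;>
          gcongr
    _ = (1 - u) / pNorm p u 1 + (1 - v) / pNorm p v 1 := by
        have := hN u; have := hN v; have := hN (u * v)
        field_simp

lemma pRelDist_mul_le_of_mem_Icc (hp : 1 ≤ p) (hu : u ∈ Icc (0 : ℝ) 1) (v : ℝ) :
    pRelDist p (u * v) 1 ≤ pRelDist p u 1 + pRelDist p v 1 := by
  obtain ⟨hu0, hu1⟩ := hu
  have hp0 : 0 < p := by linarith
  have hanti := pRelDist_one_antitoneOn hp0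
  rcases le_or_gt v 1 with hv | hv
  · exact pRelDist_mul_le_of_mem_Icc_of_le_one hp ⟨hu0, hu1⟩ hv
  rcases le_or_gt (u * v) 1 with huv | huv
  · have : pRelDist p (u * v) 1 ≤ pRelDist p u 1 :=
      hanti ⟨hu0, hu1⟩ ⟨by positivity, huv⟩ (le_mul_of_one_le_right hu0 hv.le)
    linarith [pRelDist_nonneg p v 1]
  · have : pRelDist p (u * v)⁻¹ 1 ≤ pRelDist p v⁻¹ 1 :=
      hanti ⟨by positivity, inv_le_one_of_one_le₀ hv.le⟩
        ⟨by positivity, inv_le_one_of_one_le₀ huv.le⟩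
        (inv_anti₀ (by positivity) (mul_le_of_le_one_left (by linarith) hu1))
    rw [pRelDist_inv_one hp0.ne', pRelDist_inv_one hp0.ne'] at this
    linarith [pRelDist_nonneg p u 1]

lemma pRelDist_mul_le (hp : 1 ≤ p) (u v : ℝ) :
    pRelDist p (u * v) 1 ≤ pRelDist p u 1 + pRelDist p v 1 := by
  have hp0 : 0 < p := by linarith
  have of_nonneg : ∀ {u} v, 0 ≤ u →
      pRelDist p (u * v) 1 ≤ pRelDist p u 1 + pRelDist p v 1 := by
    intro u v hu
    rcases le_total u 1 with hu1 | hu1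
    · exact pRelDist_mul_le_of_mem_Icc hp ⟨hu, hu1⟩ v
    · have := pRelDist_mul_le_of_mem_Icc hp ⟨by positivity, inv_le_one_of_one_le₀ hu1⟩ v⁻¹
      rwa [← mul_inv, pRelDist_inv_one hp0.ne', pRelDist_inv_one hp0.ne',
        pRelDist_inv_one hp0.ne'] at this
  rcases le_total 0 u with hu | hu
  · exact of_nonneg v hu
  rcases le_total 0 v with hv | hv
  · rw [mul_comm, add_comm]; exact of_nonneg u hv
  · linarith [pRelDist_le_one_of_nonneg hp0 (mul_nonneg_of_nonpos_of_nonpos hu hv),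
      one_le_pRelDist_of_nonpos hp hu, pRelDist_nonneg p v 1]

lemma pRelDist_triangle (hp : 1 ≤ p) (x y z : ℝ) :
    pRelDist p x z ≤ pRelDist p x y + pRelDist p y z := by
  have hp0 : 0 < p := by linarith
  rcases eq_or_ne y 0 with rfl | hy
  · rcases eq_or_ne x 0 with rfl | hx
    · simp
    rcases eq_or_ne z 0 with rfl | hz
    · simp
    rw [pRelDist_zero_right hp0 hx, pRelDist_comm p 0, pRelDist_zero_right hp0 hz]
    linarith [pRelDist_le_two hp0 x z]
  rcases eq_or_ne z 0 with rfl | hz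
  · rw [pRelDist_zero_right hp0 hy]
    linarith [pRelDist_zero_right_le_one hp0 x, pRelDist_nonneg p x y]
  rw [pRelDist_eq_pRelDist_div hp0.ne' hy, pRelDist_eq_pRelDist_div hp0.ne' hz,
    pRelDist_eq_pRelDist_div hp0.ne' hz, ← div_mul_div_cancel₀ hy]
  exact pRelDist_mul_le hp _ _

end

lemma isDistance_pRelDist {p : ℝ} (hp : 1 ≤ p) : IsDistance (pRelDist p) :=
  ⟨pRelDist_nonneg p, fun _ _ => pRelDist_eq_zero_iff, pRelDist_comm p, pRelDist_triangle hp⟩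

theorem p_relative_metric (p : ℝ) (hp : 1 ≤ p) :
    IsDistance (fun x y : ℝ =>
      if (x, y) = ((0 : ℝ), (0 : ℝ)) then 0
      else |y - x| / (|x| ^ p + |y| ^ p) ^ (1 / p)) := by
  convert isDistance_pRelDist hp using 1
  funext x y
  split_ifs with h
  · obtain ⟨rfl, rfl⟩ := Prod.mk.inj h
    exact (pRelDist_self p 0).symm
  · rfl
end

section
/- The function d : ℝ × ℝ → ℝ defined by d(x,y) = |y − x| / max(|x|, |y|) for (x,y) ≠ (0,0) and d(0,0) = 0 is a distance on ℝ (the relative metric). -/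
/-!
For `|x| ≤ |z|` the distance `d(x, z)` is `|z - x| / |z|`. If `|y| ≤ |z|`, both `d(x, y)` and
`d(y, z)` only grow when their denominators are replaced by `|z|`, and the ordinary triangle
inequality finishes. If `|z| ≤ |y|`, both denominators are `|y|` and the claim is the polynomial
inequality `|z - x| |y| ≤ (|y - x| + |z - y|) |z|`, which a sign analysis settles.
-/

lemma max_abs_eq_zero_iff {x y : ℝ} : max |x| |y| = 0 ↔ x = 0 ∧ y = 0 := by
  rw [← abs_nonpos_iff (a := x), ← abs_nonpos_iff (a := y), ← max_le_iff]
  exact ⟨le_of_eq, fun h => h.antisymm (le_max_of_le_left (abs_nonneg x))⟩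

lemma abs_sub_mul_le_of_abs_le_of_abs_le_of_nonneg {x y z : ℝ} (hxz : |x| ≤ |z|)
    (hzy : |z| ≤ |y|) (hy : 0 ≤ y) : |z - x| * |y| ≤ (|y - x| + |z - y|) * |z| := by
  rw [abs_of_nonneg hy] at hzy ⊢
  rw [abs_le] at hzy
  have hxy : x ≤ y := (le_abs_self x).trans (hxz.trans (abs_le.2 hzy))
  rw [abs_of_nonneg (sub_nonneg.2 hxy), abs_sub_comm z y, abs_of_nonneg (sub_nonneg.2 hzy.2)]
  rw [abs_le] at hxz
  rcases abs_cases z with ⟨hz, _⟩ | ⟨hz, _⟩ <;> rcases abs_cases (z - x) with ⟨h, _⟩ | ⟨h, _⟩ <;>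
    rw [hz] at hxz ⊢ <;> rw [h] <;> nlinarith

lemma abs_sub_mul_le_of_abs_le_of_abs_le {x y z : ℝ} (hxz : |x| ≤ |z|) (hzy : |z| ≤ |y|) :
    |z - x| * |y| ≤ (|y - x| + |z - y|) * |z| := by
  rcases le_total 0 y with hy | hy
  · exact abs_sub_mul_le_of_abs_le_of_abs_le_of_nonneg hxz hzy hy
  · have h := abs_sub_mul_le_of_abs_le_of_abs_le_of_nonneg (x := -x) (y := -y) (z := -z)
      (by simpa using hxz) (by simpa using hzy) (neg_nonneg.2 hy)
    simpa only [abs_neg, ← neg_sub', abs_sub_comm] using h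

noncomputable def relDist (x y : ℝ) : ℝ := |y - x| / max |x| |y|

namespace relDist

lemma nonneg (x y : ℝ) : 0 ≤ relDist x y := by
  unfold relDist; positivity

lemma comm (x y : ℝ) : relDist x y = relDist y x := by
  rw [relDist, relDist, abs_sub_comm, max_comm]

lemma eq_zero_iff (x y : ℝ) : relDist x y = 0 ↔ x = y := by
  rw [relDist, div_eq_zero_iff, abs_eq_zero, sub_eq_zero, max_abs_eq_zero_iff, eq_comm]
  exact or_iff_left_of_imp fun ⟨hx, hy⟩ => hx.trans hy.symm

lemma div_le_of_max_le {x y M : ℝ} (hM : max |x| |y| ≤ M) : |y - x| / M ≤ relDist x y := by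
  rcases (le_max_of_le_left (abs_nonneg x) : 0 ≤ max |x| |y|).eq_or_lt with h0 | hpos
  · obtain ⟨rfl, rfl⟩ := max_abs_eq_zero_iff.1 h0.symm
    simp [relDist]
  · exact div_le_div_of_nonneg_left (abs_nonneg _) hpos hM

lemma triangle_of_abs_le {x z : ℝ} (hxz : |x| ≤ |z|) (y : ℝ) :
    relDist x z ≤ relDist x y + relDist y z := by
  have hd : relDist x z = |z - x| / |z| := by rw [relDist, max_eq_right hxz]
  rcases le_total |y| |z| with hyz | hzy
  · calc relDist x z ≤ (|y - x| + |z - y|) / |z| := by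
          rw [hd, add_comm]; gcongr; exact abs_sub_le z y x
      _ = |y - x| / |z| + |z - y| / |z| := add_div _ _ _
      _ ≤ relDist x y + relDist y z :=
          add_le_add (div_le_of_max_le (max_le hxz hyz)) (div_le_of_max_le (max_le hyz le_rfl))
  · rw [hd, relDist, relDist, max_eq_right (hxz.trans hzy), max_eq_left hzy, ← add_div]
    rcases (abs_nonneg z).eq_or_lt with hz | hz
    · rw [← hz, div_zero]; positivity
    · rw [div_le_div_iff₀ hz (hz.trans_le hzy)]
      exact abs_sub_mul_le_of_abs_le_of_abs_le hxz hzy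

lemma triangle (x y z : ℝ) : relDist x z ≤ relDist x y + relDist y z := by
  rcases le_total |x| |z| with hxz | hzx
  · exact triangle_of_abs_le hxz y
  · simpa only [comm, add_comm] using triangle_of_abs_le hzx y

end relDist

theorem isDistance_relDist : IsDistance relDist :=
  ⟨relDist.nonneg, relDist.eq_zero_iff, relDist.comm, relDist.triangle⟩

theorem relative_metric :
    IsDistance (fun x y : ℝ =>
      if (x, y) = ((0 : ℝ), (0 : ℝ)) then 0
      else |y - x| / max |x| |y|) := by
  -- the case distinction is redundant: at `(0, 0)` the quotient is `0 / 0 = 0`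
  convert isDistance_relDist using 3 with x y
  split_ifs with h
  · obtain ⟨rfl, rfl⟩ := Prod.ext_iff.1 h
    simp [relDist]
  · rfl
end
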